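/- arXiv:1312.2770 — 2 statements merged into one kernel-verified Lean document; each statement's English description precedes it below -/
import Mathlib

section
/- Let E and F be Banach lattices such that F has the property (d). Let T : E → F be an order bounded operator and let A be a norm bounded solid subset of E. Then T(A) is an almost limited subset of F if and only if f_n(T(x_n)) → 0 for every disjoint sequence (x_n) contained in A ∩ E⁺ and every disjoint weak* null sequence (f_n) consisting of positive functionals in F*. -/
open Filter Topology Metric Pointwise

/-- The value `|f| x` of the modulus of a continuous linear functional at a positive
element `x`, given by the Riesz–Kantorovich formula `|f| x = sup { f u : |u| ≤ x }`. -/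
noncomputable def absFunctional {E : Type*} [NormedAddCommGroup E] [Lattice E] [IsOrderedAddMonoid E] [HasSolidNorm E] [NormedSpace ℝ E]
    (f : E →L[ℝ] ℝ) (x : E) : ℝ :=
  sSup ((fun u => f u) '' {u : E | |u| ≤ x})

/-- Two functionals `f, g` on a Banach lattice are (lattice) disjoint: `|f| ⊓ |g| = 0`,
expressed via the Riesz–Kantorovich formula for the infimum of the positive functionals
`|f|` and `|g|`. -/
def DualDisjoint {E : Type*} [NormedAddCommGroup E] [Lattice E] [IsOrderedAddMonoid E] [HasSolidNorm E] [NormedSpace ℝ E]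
    (f g : E →L[ℝ] ℝ) : Prop :=
  ∀ x : E, 0 ≤ x → ∀ ε : ℝ, 0 < ε →
    ∃ y : E, 0 ≤ y ∧ y ≤ x ∧ absFunctional f y + absFunctional g (x - y) < ε

/-- A sequence of functionals is disjoint if any two distinct terms are lattice disjoint. -/
def DualDisjointSeq {E : Type*} [NormedAddCommGroup E] [Lattice E] [IsOrderedAddMonoid E] [HasSolidNorm E] [NormedSpace ℝ E]
    (f : ℕ → E →L[ℝ] ℝ) : Prop :=
  ∀ m k, m ≠ k → DualDisjoint (f m) (f k)

/-- A sequence of functionals is weak* null if it converges to `0` pointwise. -/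
def WeakStarNull {E : Type*} [NormedAddCommGroup E] [NormedSpace ℝ E]
    (f : ℕ → E →L[ℝ] ℝ) : Prop :=
  ∀ x : E, Tendsto (fun n => f n x) atTop (𝓝 (0 : ℝ))

/-- The sequence `(|f n|)` of moduli is weak* null (it suffices to test on positive
elements since `|f n|` is additive and every element is a difference of positives). -/
def AbsWeakStarNull {E : Type*} [NormedAddCommGroup E] [Lattice E] [IsOrderedAddMonoid E] [HasSolidNorm E] [NormedSpace ℝ E]
    (f : ℕ → E →L[ℝ] ℝ) : Prop :=
  ∀ x : E, 0 ≤ x → Tendsto (fun n => absFunctional (f n) x) atTop (𝓝 (0 : ℝ))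

/-- A functional is positive if it is nonnegative on the positive cone. -/
def PositiveFunctional {E : Type*} [NormedAddCommGroup E] [Lattice E] [IsOrderedAddMonoid E] [HasSolidNorm E] [NormedSpace ℝ E]
    (f : E →L[ℝ] ℝ) : Prop :=
  ∀ x : E, 0 ≤ x → 0 ≤ f x

/-- A norm bounded set `A` is almost limited if every disjoint weak* null sequence of
functionals converges to `0` uniformly on `A`. -/
def AlmostLimitedSet {E : Type*} [NormedAddCommGroup E] [Lattice E] [IsOrderedAddMonoid E] [HasSolidNorm E] [NormedSpace ℝ E]
    (A : Set E) : Prop :=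
  Bornology.IsBounded A ∧
    ∀ f : ℕ → E →L[ℝ] ℝ, DualDisjointSeq f → WeakStarNull f →
      TendstoUniformlyOn (fun n x => f n x) (fun _ => (0 : ℝ)) atTop A

/-- A norm bounded set `A` in a Banach space is limited if every weak* null sequence of
functionals converges to `0` uniformly on `A`. -/
def LimitedSet {X : Type*} [NormedAddCommGroup X] [NormedSpace ℝ X] (A : Set X) : Prop :=
  Bornology.IsBounded A ∧
    ∀ f : ℕ → X →L[ℝ] ℝ, WeakStarNull f →
      TendstoUniformlyOn (fun n x => f n x) (fun _ => (0 : ℝ)) atTop A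

/-- Property (d): for every disjoint weak* null sequence `(f n)`, `(|f n|)` is weak* null. -/
def PropertyD (E : Type*) [NormedAddCommGroup E] [Lattice E] [IsOrderedAddMonoid E] [HasSolidNorm E] [NormedSpace ℝ E] : Prop :=
  ∀ f : ℕ → E →L[ℝ] ℝ, DualDisjointSeq f → WeakStarNull f → AbsWeakStarNull f

/-- The lattice operations of the dual are weak* sequentially continuous: for every
weak* null sequence `(f n)`, `(|f n|)` is weak* null. -/
def DualLatticeWeakStarSeqCont (E : Type*) [NormedAddCommGroup E] [Lattice E] [IsOrderedAddMonoid E] [HasSolidNorm E]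
    [NormedSpace ℝ E] : Prop :=
  ∀ f : ℕ → E →L[ℝ] ℝ, WeakStarNull f → AbsWeakStarNull f

/-- A sequence in a Banach lattice is disjoint if the moduli of distinct terms meet at 0. -/
def LatticeDisjointSeq {E : Type*} [NormedAddCommGroup E] [Lattice E] [IsOrderedAddMonoid E] [HasSolidNorm E] (x : ℕ → E) : Prop :=
  ∀ m k, m ≠ k → |x m| ⊓ |x k| = 0

/-- A sequence is weakly null if `f (x n) → 0` for every continuous linear functional. -/
def WeaklyNull {E : Type*} [NormedAddCommGroup E] [NormedSpace ℝ E] (x : ℕ → E) : Prop :=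
  ∀ f : E →L[ℝ] ℝ, Tendsto (fun n => f (x n)) atTop (𝓝 (0 : ℝ))

/-- A set is solid if `x ∈ A` and `|y| ≤ |x|` imply `y ∈ A`. -/
def IsSolid {E : Type*} [NormedAddCommGroup E] [Lattice E] [IsOrderedAddMonoid E] [HasSolidNorm E] (A : Set E) : Prop :=
  ∀ x ∈ A, ∀ y : E, |y| ≤ |x| → y ∈ A

/-- The solid hull of a set. -/
def solidHull {E : Type*} [NormedAddCommGroup E] [Lattice E] [IsOrderedAddMonoid E] [HasSolidNorm E] (A : Set E) : Set E :=
  {y | ∃ x ∈ A, |y| ≤ |x|}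

/-- A set is almost order bounded if for every `ε > 0` it is contained in
`[-u, u] + ε B_E` for some positive `u`. -/
def AlmostOrderBounded {E : Type*} [NormedAddCommGroup E] [Lattice E] [IsOrderedAddMonoid E] [HasSolidNorm E] (A : Set E) : Prop :=
  ∀ ε : ℝ, 0 < ε → ∃ u : E, 0 ≤ u ∧ A ⊆ Set.Icc (-u) u + Metric.closedBall (0 : E) ε

/-- σ-Dedekind completeness: every countable nonempty set bounded above has a supremum. -/
def SigmaDedekindComplete (E : Type*) [NormedAddCommGroup E] [Lattice E] [IsOrderedAddMonoid E] [HasSolidNorm E] : Prop :=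
  ∀ s : Set E, s.Countable → s.Nonempty → BddAbove s → ∃ b : E, IsLUB s b

/-- A set is relatively weakly compact if its closure in the weak topology is compact. -/
def RelativelyWeaklyCompact {E : Type*} [NormedAddCommGroup E] [NormedSpace ℝ E]
    (A : Set E) : Prop :=
  IsCompact (closure ((toWeakSpace ℝ E) '' A))

/-- The weak Dunford–Pettis* property: every relatively weakly compact set is almost limited. -/
def WDPStar (E : Type*) [NormedAddCommGroup E] [Lattice E] [IsOrderedAddMonoid E] [HasSolidNorm E] [NormedSpace ℝ E] : Prop :=
  ∀ A : Set E, RelativelyWeaklyCompact A → AlmostLimitedSet A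

/-- The bi-sequence property: for each disjoint weakly null sequence in the positive cone
and each weak* null sequence of positive functionals, `f n (x n) → 0`. -/
def BiSequenceProperty (E : Type*) [NormedAddCommGroup E] [Lattice E] [IsOrderedAddMonoid E] [HasSolidNorm E] [NormedSpace ℝ E] : Prop :=
  ∀ x : ℕ → E, (∀ n, 0 ≤ x n) → LatticeDisjointSeq x → WeaklyNull x →
    ∀ f : ℕ → E →L[ℝ] ℝ, (∀ n, PositiveFunctional (f n)) → WeakStarNull f →
      Tendsto (fun n => f n (x n)) atTop (𝓝 (0 : ℝ))

/-- The dual Schur property: every disjoint weak* null sequence of functionals is norm null. -/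
def DualSchur (E : Type*) [NormedAddCommGroup E] [Lattice E] [IsOrderedAddMonoid E] [HasSolidNorm E] [NormedSpace ℝ E] : Prop :=
  ∀ f : ℕ → E →L[ℝ] ℝ, DualDisjointSeq f → WeakStarNull f →
    Tendsto (fun n => ‖f n‖) atTop (𝓝 (0 : ℝ))

/-- The dual positive Schur property: every weak* null sequence of positive functionals
is norm null. -/
def DualPositiveSchur (E : Type*) [NormedAddCommGroup E] [Lattice E] [IsOrderedAddMonoid E] [HasSolidNorm E] [NormedSpace ℝ E] : Prop :=
  ∀ f : ℕ → E →L[ℝ] ℝ, (∀ n, PositiveFunctional (f n)) → WeakStarNull f →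
    Tendsto (fun n => ‖f n‖) atTop (𝓝 (0 : ℝ))

/-- The norm of a Banach lattice is order continuous: every net decreasing to `0`
converges to `0` in norm. -/
def OrderContinuousNorm (E : Type*) [NormedAddCommGroup E] [Lattice E] [IsOrderedAddMonoid E] [HasSolidNorm E] : Prop :=
  ∀ {ι : Type*} [Preorder ι] [IsDirected ι (· ≤ ·)] [Nonempty ι] (x : ι → E),
    Antitone x → IsGLB (Set.range x) 0 → Tendsto (fun i => ‖x i‖) atTop (𝓝 (0 : ℝ))

/-- The norm of the dual Banach lattice is order continuous: every net of functionals
decreasing to `0` (in the dual order, i.e., pointwise on the positive cone, with greatest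
lower bound `0`) converges to `0` in norm. -/
def DualOrderContinuousNorm (E : Type*) [NormedAddCommGroup E] [Lattice E] [IsOrderedAddMonoid E] [HasSolidNorm E]
    [NormedSpace ℝ E] : Prop :=
  ∀ {ι : Type*} [Preorder ι] [IsDirected ι (· ≤ ·)] [Nonempty ι] (f : ι → E →L[ℝ] ℝ),
    (∀ i j, i ≤ j → ∀ x : E, 0 ≤ x → f j x ≤ f i x) →
    (∀ i, PositiveFunctional (f i)) →
    (∀ g : E →L[ℝ] ℝ, (∀ i, ∀ x : E, 0 ≤ x → g x ≤ f i x) → ∀ x : E, 0 ≤ x → g x ≤ 0) →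
    Tendsto (fun i => ‖f i‖) atTop (𝓝 (0 : ℝ))

/-- A norm bounded set `A` is L-weakly compact if every disjoint sequence in its solid
hull is norm null. -/
def LWeaklyCompactSet {E : Type*} [NormedAddCommGroup E] [Lattice E] [IsOrderedAddMonoid E] [HasSolidNorm E] (A : Set E) : Prop :=
  Bornology.IsBounded A ∧
    ∀ y : ℕ → E, (∀ n, y n ∈ solidHull A) → LatticeDisjointSeq y →
      Tendsto (fun n => ‖y n‖) atTop (𝓝 (0 : ℝ))

/-- An atom of a Banach lattice. -/
def IsLatticeAtom {E : Type*} [NormedAddCommGroup E] [Lattice E] [IsOrderedAddMonoid E] [HasSolidNorm E] (a : E) : Prop :=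
  0 < a ∧ ∀ x y : E, 0 ≤ x → x ≤ a → 0 ≤ y → y ≤ a → x ⊓ y = 0 → x = 0 ∨ y = 0

/-- A Banach lattice is discrete (atomic) if the band generated by its atoms is the whole
lattice; equivalently, the only element disjoint from all atoms is `0`. -/
def DiscreteBanachLattice (E : Type*) [NormedAddCommGroup E] [Lattice E] [IsOrderedAddMonoid E] [HasSolidNorm E] : Prop :=
  ∀ x : E, (∀ a : E, IsLatticeAtom a → |x| ⊓ a = 0) → x = 0

/-- A linear operator between Banach lattices is order bounded if it maps order intervals
into order intervals. -/
def OrderBoundedOperator {E F : Type*} [NormedAddCommGroup E] [Lattice E] [IsOrderedAddMonoid E] [HasSolidNorm E] [NormedSpace ℝ E]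
    [NormedAddCommGroup F] [Lattice F] [IsOrderedAddMonoid F] [HasSolidNorm F] [NormedSpace ℝ F] (T : E →ₗ[ℝ] F) : Prop :=
  ∀ a b : E, ∃ c d : F, T '' Set.Icc a b ⊆ Set.Icc c d

/-!
Necessity is immediate. For sufficiency, `T(A)` is norm bounded because `T` is order bounded and
`E` is complete, and by property (d) the moduli `|fₙ|` of a disjoint weak* null sequence are weak*
null. If `fₙ ∘ T` did not tend to `0` uniformly on `A`, there would be `ε > 0` and `xₖ ∈ A` with
`|fₖ (T xₖ)| ≥ ε` along a subsequence. A sliding hump writes `x_{m(j+1)} = pⱼ + qⱼ + rⱼ` with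
`(pⱼ)` disjoint in the solid set `A`, `|qⱼ|` dominated by the earlier terms, on which
`|f_{m(j+1)}|` was made small when choosing `m (j + 1)`, and `|rⱼ| ≤ u` for one `u ≥ 0`, on which
`|fₙ| → 0`. Applying the hypothesis to the positive and negative parts of `pⱼ` and of `fₙ` gives
`f_{m(j+1)} (T pⱼ) → 0`, a contradiction.
-/

lemma nonneg_of_two_pow_nsmul_nonneg {G : Type*} [AddCommGroup G] [Lattice G] [IsOrderedAddMonoid G]
    {y : G} (k : ℕ) (h : 0 ≤ 2 ^ k • y) : 0 ≤ y := by
  induction k generalizing y with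
  | zero => simpa using h
  | succ k ih => exact nsmul_two_semiclosed (ih (by rwa [← mul_nsmul', ← pow_succ]))

section ScalarOrder

variable {X : Type*} [NormedAddCommGroup X] [Lattice X] [IsOrderedAddMonoid X] [HasSolidNorm X]
  [NormedSpace ℝ X]

-- Not among the class assumptions: dyadic multiples of `x ≥ 0` are positive, and they
-- approximate `c • x` in the closed positive cone.
instance HasSolidNorm.toPosSMulMono : PosSMulMono ℝ X := .of_smul_nonneg fun c hc x hx => by
  have hlim : Tendsto (fun k : ℕ => ((⌊c * 2 ^ k⌋₊ : ℝ) / 2 ^ k) • x) atTop (𝓝 (c • x)) :=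
    ((tendsto_nat_floor_mul_div_atTop hc).comp
      (tendsto_pow_atTop_atTop_of_one_lt one_lt_two)).smul_const x
  refine ge_of_tendsto hlim (Eventually.of_forall fun k => nonneg_of_two_pow_nsmul_nonneg k ?_)
  rw [← Nat.cast_smul_eq_nsmul ℝ, smul_smul, Nat.cast_pow, Nat.cast_ofNat,
    mul_div_cancel₀ _ (by positivity), Nat.cast_smul_eq_nsmul]
  exact nsmul_nonneg hx _

lemma smul_sup_of_nonneg {c : ℝ} (hc : 0 ≤ c) (x y : X) : c • (x ⊔ y) = c • x ⊔ c • y := by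
  rcases hc.eq_or_lt with rfl | hc
  · simp
  · exact (OrderIso.smulRight hc).map_sup x y

lemma smul_posPart_of_nonneg {c : ℝ} (hc : 0 ≤ c) (x : X) : (c • x)⁺ = c • x⁺ := by
  rw [posPart_def, posPart_def, smul_sup_of_nonneg hc, smul_zero]

lemma abs_smul_of_nonneg {c : ℝ} (hc : 0 ≤ c) (x : X) : |c • x| = c • |x| := by
  rw [abs, abs, smul_sup_of_nonneg hc, smul_neg]

end ScalarOrder

section Riesz

variable {X : Type*} [AddCommGroup X] [Lattice X] [IsOrderedAddMonoid X]

lemma exists_abs_le_abs_sub_le_of_abs_le_add {w a b : X} (ha : 0 ≤ a) (hb : 0 ≤ b)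
    (h : |w| ≤ a + b) : ∃ p, |p| ≤ a ∧ |w - p| ≤ b := by
  obtain ⟨hw, hnw⟩ := abs_le'.1 h
  refine ⟨w ⊓ a ⊔ -a, abs_le'.2 ⟨sup_le inf_le_right (neg_le_self ha), neg_le.1 le_sup_right⟩,
    abs_le'.2 ⟨?_, ?_⟩⟩
  · exact sub_le_comm.1 (le_sup_of_le_left (le_inf (sub_le_self w hb)
      (sub_le_iff_le_add.2 hw)))
  · rw [neg_sub, sub_le_iff_le_add]
    refine sup_le (inf_le_left.trans (le_add_of_nonneg_left hb)) (neg_le_iff_add_nonneg.2 ?_)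
    simpa only [add_comm, add_left_comm, add_assoc] using neg_le_iff_add_nonneg.1 hnw

lemma posPart_le_abs (a : X) : a⁺ ≤ |a| :=
  posPart_add_negPart a ▸ le_add_of_nonneg_right (negPart_nonneg a)

lemma negPart_le_abs (a : X) : a⁻ ≤ |a| :=
  posPart_add_negPart a ▸ le_add_of_nonneg_left (posPart_nonneg a)

end Riesz

lemma apply_le_norm_mul_of_abs_le {X : Type*} [NormedAddCommGroup X] [Lattice X] [HasSolidNorm X]
    [NormedSpace ℝ X] (f : X →L[ℝ] ℝ) {u x : X} (h : |u| ≤ x) : f u ≤ ‖f‖ * ‖x‖ :=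
  (Real.le_norm_self _).trans <| (f.le_opNorm u).trans <| by
    gcongr; exact norm_le_norm_of_abs_le_abs (h.trans (le_abs_self x))

section AbsFunctional

variable {X : Type*} [NormedAddCommGroup X] [Lattice X] [IsOrderedAddMonoid X] [HasSolidNorm X]
  [NormedSpace ℝ X] (f : X →L[ℝ] ℝ)

lemma le_absFunctional {u x : X} (h : |u| ≤ x) : f u ≤ absFunctional f x :=
  le_csSup ⟨‖f‖ * ‖x‖, by rintro _ ⟨v, hv, rfl⟩; exact apply_le_norm_mul_of_abs_le f hv⟩ ⟨u, h, rfl⟩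

lemma absFunctional_le {x : X} (hx : 0 ≤ x) {C : ℝ} (h : ∀ u, |u| ≤ x → f u ≤ C) :
    absFunctional f x ≤ C :=
  csSup_le ⟨f 0, 0, by simpa using hx, rfl⟩ (by rintro _ ⟨u, hu, rfl⟩; exact h u hu)

lemma absFunctional_nonneg {x : X} (hx : 0 ≤ x) : 0 ≤ absFunctional f x := by
  simpa using le_absFunctional f (u := 0) (by simpa using hx)

lemma absFunctional_mono {x y : X} (hx : 0 ≤ x) (hxy : x ≤ y) :
    absFunctional f x ≤ absFunctional f y :=
  absFunctional_le f hx fun _ hu => le_absFunctional f (hu.trans hxy)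

lemma abs_apply_le_absFunctional (z : X) : |f z| ≤ absFunctional f |z| :=
  abs_le'.2 ⟨le_absFunctional f le_rfl, by simpa using le_absFunctional f (abs_neg z).le⟩

lemma absFunctional_le_norm_mul {x : X} (hx : 0 ≤ x) : absFunctional f x ≤ ‖f‖ * ‖x‖ :=
  absFunctional_le f hx fun _ hu => apply_le_norm_mul_of_abs_le f hu

lemma absFunctional_add {a b : X} (ha : 0 ≤ a) (hb : 0 ≤ b) :
    absFunctional f (a + b) = absFunctional f a + absFunctional f b := by
  refine le_antisymm (absFunctional_le f (add_nonneg ha hb) fun w hw => ?_) ?_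
  · obtain ⟨p, hp, hwp⟩ := exists_abs_le_abs_sub_le_of_abs_le_add ha hb hw
    calc f w = f p + f (w - p) := by rw [← map_add, add_sub_cancel]
      _ ≤ _ := add_le_add (le_absFunctional f hp) (le_absFunctional f hwp)
  · rw [← le_sub_iff_add_le]
    refine absFunctional_le f ha fun u hu => le_sub_comm.1 <| absFunctional_le f hb fun v hv => ?_
    rw [le_sub_iff_add_le', ← map_add]
    exact le_absFunctional f ((abs_add_le u v).trans (add_le_add hu hv))

lemma absFunctional_zero : absFunctional f 0 = 0 := by
  simpa using absFunctional_add f le_rfl le_rfl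

end AbsFunctional

section Modulus

variable {X : Type*} [NormedAddCommGroup X] [Lattice X] [IsOrderedAddMonoid X] [HasSolidNorm X]
  [NormedSpace ℝ X]

lemma absFunctional_posPart_sub_negPart_add (f : X →L[ℝ] ℝ) (x y : X) :
    absFunctional f (x + y)⁺ - absFunctional f (x + y)⁻ =
      (absFunctional f x⁺ - absFunctional f x⁻) + (absFunctional f y⁺ - absFunctional f y⁻) := by
  have h : (x + y)⁺ + (x⁻ + y⁻) = (x⁺ + y⁺) + (x + y)⁻ := sub_eq_sub_iff_add_eq_add.1 <| by
    rw [posPart_sub_negPart, add_sub_add_comm, posPart_sub_negPart, posPart_sub_negPart]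
  have := congrArg (absFunctional f) h
  rw [absFunctional_add f (posPart_nonneg _) (add_nonneg (negPart_nonneg _) (negPart_nonneg _)),
    absFunctional_add f (add_nonneg (posPart_nonneg _) (posPart_nonneg _)) (negPart_nonneg _),
    absFunctional_add f (negPart_nonneg x) (negPart_nonneg y),
    absFunctional_add f (posPart_nonneg x) (posPart_nonneg y)] at this
  linarith

-- `absFunctional f` is additive on the positive cone, so this is additive; it is continuous,
-- hence `ℝ`-linear.
noncomputable def absCLM (f : X →L[ℝ] ℝ) : X →L[ℝ] ℝ :=
  (AddMonoidHom.mk' (fun x => absFunctional f x⁺ - absFunctional f x⁻)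
    (absFunctional_posPart_sub_negPart_add f)).toRealLinearMap <|
    AddMonoidHomClass.continuous_of_bound _ ‖f‖ fun x => by
      have hx : ∀ z, 0 ≤ z → z ≤ |x| → 0 ≤ absFunctional f z ∧ absFunctional f z ≤ ‖f‖ * ‖x‖ :=
        fun z hz hzx => ⟨absFunctional_nonneg f hz, (absFunctional_le_norm_mul f hz).trans <| by
          gcongr; exact norm_le_norm_of_abs_le_abs (by rwa [abs_of_nonneg hz])⟩
      obtain ⟨h₁, h₂⟩ := hx _ (posPart_nonneg x) (posPart_le_abs x)
      obtain ⟨h₃, h₄⟩ := hx _ (negPart_nonneg x) (negPart_le_abs x)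
      exact abs_sub_le_of_nonneg_of_le h₁ h₂ h₃ h₄

lemma absCLM_apply (f : X →L[ℝ] ℝ) (x : X) :
    absCLM f x = absFunctional f x⁺ - absFunctional f x⁻ := rfl

lemma absCLM_apply_of_nonneg (f : X →L[ℝ] ℝ) {x : X} (hx : 0 ≤ x) :
    absCLM f x = absFunctional f x := by
  rw [absCLM_apply, posPart_eq_self.2 hx, negPart_eq_zero.2 hx, absFunctional_zero, sub_zero]

lemma absFunctional_neg (f : X →L[ℝ] ℝ) (x : X) : absFunctional (-f) x = absFunctional f x := by
  unfold absFunctional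
  congr 1
  ext r
  constructor <;> rintro ⟨u, hu, rfl⟩ <;> exact ⟨-u, by simpa using hu, by simp⟩

-- The negative part of `f` is taken to be `posPartCLM (-f)`.
noncomputable def posPartCLM (f : X →L[ℝ] ℝ) : X →L[ℝ] ℝ := (2⁻¹ : ℝ) • (absCLM f + f)

lemma posPartCLM_apply (f : X →L[ℝ] ℝ) (x : X) :
    posPartCLM f x = 2⁻¹ * (absCLM f x + f x) := rfl

lemma posPartCLM_sub_posPartCLM_neg (f : X →L[ℝ] ℝ) (x : X) :
    posPartCLM f x - posPartCLM (-f) x = f x := by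
  have : absCLM (-f) = absCLM f := by
    ext x; simp only [absCLM_apply, absFunctional_neg]
  rw [posPartCLM_apply, posPartCLM_apply, this]
  simp only [neg_apply]
  ring

lemma abs_apply_le_absFunctional_of_nonneg (f : X →L[ℝ] ℝ) {y : X} (hy : 0 ≤ y) :
    |f y| ≤ absFunctional f y := by
  simpa [abs_of_nonneg hy] using abs_apply_le_absFunctional f y

lemma positiveFunctional_posPartCLM (f : X →L[ℝ] ℝ) : PositiveFunctional (posPartCLM f) :=
  fun y hy => by
    have := neg_le_of_abs_le (abs_apply_le_absFunctional_of_nonneg f hy)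
    rw [posPartCLM_apply, absCLM_apply_of_nonneg f hy]
    linarith

lemma posPartCLM_le_absFunctional (f : X →L[ℝ] ℝ) {y : X} (hy : 0 ≤ y) :
    posPartCLM f y ≤ absFunctional f y := by
  have := le_of_abs_le (abs_apply_le_absFunctional_of_nonneg f hy)
  rw [posPartCLM_apply, absCLM_apply_of_nonneg f hy]
  linarith

lemma PositiveFunctional.absFunctional_eq {g : X →L[ℝ] ℝ} (hg : PositiveFunctional g) {y : X}
    (hy : 0 ≤ y) : absFunctional g y = g y := by
  refine le_antisymm (absFunctional_le g hy fun u hu => ?_) (le_absFunctional g (abs_of_nonneg hy).le)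
  have := hg _ (sub_nonneg.2 ((le_abs_self u).trans hu))
  rw [map_sub] at this
  linarith

lemma DualDisjoint.mono {f g f' g' : X →L[ℝ] ℝ} (h : DualDisjoint f g)
    (hf : ∀ y, 0 ≤ y → absFunctional f' y ≤ absFunctional f y)
    (hg : ∀ y, 0 ≤ y → absFunctional g' y ≤ absFunctional g y) : DualDisjoint f' g' := by
  intro x hx ε hε
  obtain ⟨y, hy0, hyx, hlt⟩ := h x hx ε hε
  exact ⟨y, hy0, hyx, (add_le_add (hf y hy0) (hg _ (sub_nonneg.2 hyx))).trans_lt hlt⟩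

end Modulus

section WeakStarNull

variable {X : Type*} [NormedAddCommGroup X] [NormedSpace ℝ X] {f : ℕ → X →L[ℝ] ℝ}

lemma WeakStarNull.neg (h : WeakStarNull f) : WeakStarNull fun n => -f n :=
  fun x => by simpa using (h x).neg

lemma WeakStarNull.comp (h : WeakStarNull f) {φ : ℕ → ℕ} (hφ : StrictMono φ) :
    WeakStarNull (f ∘ φ) :=
  fun x => (h x).comp hφ.tendsto_atTop

end WeakStarNull

section FunctionalSequences

variable {X : Type*} [NormedAddCommGroup X] [Lattice X] [IsOrderedAddMonoid X] [HasSolidNorm X]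
  [NormedSpace ℝ X] {f : ℕ → X →L[ℝ] ℝ}

lemma DualDisjointSeq.posPart (h : DualDisjointSeq f) :
    DualDisjointSeq fun n => posPartCLM (f n) := by
  have hle : ∀ n y, 0 ≤ y → absFunctional (posPartCLM (f n)) y ≤ absFunctional (f n) y :=
    fun n y hy => ((positiveFunctional_posPartCLM _).absFunctional_eq hy).trans_le
      (posPartCLM_le_absFunctional _ hy)
  exact fun m k hmk => (h m k hmk).mono (hle m) (hle k)

lemma DualDisjointSeq.neg (h : DualDisjointSeq f) : DualDisjointSeq fun n => -f n := by
  simpa only [DualDisjointSeq, DualDisjoint, absFunctional_neg] using h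

lemma DualDisjointSeq.comp (h : DualDisjointSeq f) {φ : ℕ → ℕ} (hφ : StrictMono φ) :
    DualDisjointSeq (f ∘ φ) :=
  fun m k hmk => h (φ m) (φ k) (hφ.injective.ne hmk)

lemma AbsWeakStarNull.neg (h : AbsWeakStarNull f) : AbsWeakStarNull fun n => -f n := by
  simpa only [AbsWeakStarNull, absFunctional_neg] using h

lemma AbsWeakStarNull.comp (h : AbsWeakStarNull f) {φ : ℕ → ℕ} (hφ : StrictMono φ) :
    AbsWeakStarNull (f ∘ φ) :=
  fun x hx => (h x hx).comp hφ.tendsto_atTop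

lemma WeakStarNull.posPart (hw : WeakStarNull f) (ha : AbsWeakStarNull f) :
    WeakStarNull fun n => posPartCLM (f n) := fun z => by
  have habs := (ha _ (posPart_nonneg z)).sub (ha _ (negPart_nonneg z))
  simpa [posPartCLM_apply, absCLM_apply] using (habs.add (hw z)).const_mul 2⁻¹

end FunctionalSequences

lemma exists_strictMono_forall_partialSum {X : Type*} [AddCommMonoid X] (a : ℕ → X)
    {P : ℕ → ℕ → X → Prop} (hP : ∀ j s, ∀ᶠ k in atTop, P j k s) :
    ∃ m : ℕ → ℕ, StrictMono m ∧ ∀ j, P j (m (j + 1)) (∑ i ∈ Finset.range (j + 1), a (m i)) := by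
  choose next hnext using fun j s J => ((eventually_gt_atTop J).and (hP j s)).exists
  let st : ℕ → ℕ × X := fun j =>
    Nat.rec (0, a 0) (fun j p => (next j p.2 p.1, p.2 + a (next j p.2 p.1))) j
  have hsum : ∀ j, (st j).2 = ∑ i ∈ Finset.range (j + 1), a (st i).1 := by
    intro j
    induction j with
    | zero => simp [st]
    | succ j ih => rw [Finset.sum_range_succ, ← ih]
  refine ⟨fun j => (st j).1, strictMono_nat_of_lt_succ fun j => (hnext j _ _).1, fun j => ?_⟩
  rw [← hsum]
  exact (hnext j _ _).2

lemma LatticeDisjointSeq.mono {X : Type*} [NormedAddCommGroup X] [Lattice X] [IsOrderedAddMonoid X]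
    [HasSolidNorm X] {p q : ℕ → X} (hp : LatticeDisjointSeq p) (hqp : ∀ n, |q n| ≤ |p n|) :
    LatticeDisjointSeq q := fun m k hmk =>
  le_antisymm ((inf_le_inf (hqp m) (hqp k)).trans_eq (hp m k hmk))
    (le_inf (abs_nonneg _) (abs_nonneg _))

section SlidingHump

variable {X : Type*} [NormedAddCommGroup X] [Lattice X] [IsOrderedAddMonoid X] [HasSolidNorm X]
  [NormedSpace ℝ X]

lemma exists_nonneg_abs_le_two_pow_smul [CompleteSpace X] {a : ℕ → X} {M : ℝ}
    (hM : ∀ k, ‖a k‖ ≤ M) : ∃ u : X, 0 ≤ u ∧ ∀ k, |a k| ≤ (2 : ℝ) ^ k • u := by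
  have hnonneg : ∀ i, 0 ≤ (2⁻¹ : ℝ) ^ i • |a i| :=
    fun i => smul_nonneg (by positivity) (abs_nonneg _)
  have hsum : Summable fun i => (2⁻¹ : ℝ) ^ i • |a i| :=
    .of_norm_bounded (summable_geometric_two.mul_right M) fun i => by
      rw [norm_smul, norm_abs_eq_norm, norm_pow, norm_inv, Real.norm_two, one_div]
      gcongr
      exact hM i
  refine ⟨∑' i, (2⁻¹ : ℝ) ^ i • |a i|, tsum_nonneg hnonneg, fun k => ?_⟩
  calc |a k| = (2 : ℝ) ^ k • ((2⁻¹ : ℝ) ^ k • |a k|) := by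
        rw [smul_smul, ← mul_pow, mul_inv_cancel₀ two_ne_zero, one_pow, one_smul]
    _ ≤ _ := smul_le_smul_of_nonneg_left (hsum.le_tsum k fun j _ => hnonneg j) (by positivity)

def slidingHump (v σ : ℕ → X) (u : X) (j : ℕ) : X := (v (j + 1) - (2 : ℝ) ^ (j + 1) • σ j - u)⁺

variable {v σ : ℕ → X} {u : X}

-- For `n < m` the two humps lie on opposite sides of `v (n + 1) - u`:
-- the first below its positive part, the second below `2 ^ (m + 1)` times its negative part.
lemma slidingHump_inf_slidingHump_eq_zero (hv : ∀ j, 0 ≤ v j) (hvu : ∀ j, v j ≤ (2 : ℝ) ^ j • u)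
    (hσ : ∀ i j, i ≤ j → v i ≤ σ j) {n m : ℕ} (hnm : n < m) :
    slidingHump v σ u n ⊓ slidingHump v σ u m = 0 := by
  set c : ℝ := 2 ^ (m + 1)
  set z := v (n + 1) - u
  have hσn : 0 ≤ (2 : ℝ) ^ (n + 1) • σ n :=
    smul_nonneg (by positivity) ((hv 0).trans (hσ 0 n n.zero_le))
  have h₁ : slidingHump v σ u n ≤ (c • z)⁺ := by
    rw [smul_posPart_of_nonneg (by positivity)]
    refine (posPart_mono ?_).trans (le_smul_of_one_le_left (posPart_nonneg z) (one_le_pow₀ one_le_two))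
    exact sub_le_sub_right (sub_le_self _ hσn) u
  have h₂ : slidingHump v σ u m ≤ (c • z)⁻ := by
    rw [slidingHump, ← posPart_neg, smul_sub, neg_sub]
    refine posPart_mono ?_
    calc v (m + 1) - c • σ m - u ≤ c • u - c • v (n + 1) - 0 :=
          sub_le_sub (sub_le_sub (hvu _) (smul_le_smul_of_nonneg_left (hσ _ _ hnm) (by positivity)))
            ((hv 0).trans (by simpa using hvu 0))
      _ = c • u - c • v (n + 1) := sub_zero _
  exact le_antisymm ((inf_le_inf h₁ h₂).trans_eq (posPart_inf_negPart_eq_zero _))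
    (le_inf (posPart_nonneg _) (posPart_nonneg _))

lemma latticeDisjointSeq_slidingHump (hv : ∀ j, 0 ≤ v j) (hvu : ∀ j, v j ≤ (2 : ℝ) ^ j • u)
    (hσ : ∀ i j, i ≤ j → v i ≤ σ j) : LatticeDisjointSeq (slidingHump v σ u) := by
  intro n m hnm
  simp only [slidingHump, abs_of_nonneg (posPart_nonneg _)]
  rcases hnm.lt_or_gt with h | h
  · exact slidingHump_inf_slidingHump_eq_zero hv hvu hσ h
  · rw [inf_comm]
    exact slidingHump_inf_slidingHump_eq_zero hv hvu hσ h

lemma exists_slidingHump_decomposition (hv : ∀ j, 0 ≤ v j) (hvu : ∀ j, v j ≤ (2 : ℝ) ^ j • u)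
    (hσ : ∀ i j, i ≤ j → v i ≤ σ j) {w : ℕ → X} (hw : ∀ j, |w j| ≤ v (j + 1)) :
    ∃ p q r : ℕ → X, (∀ j, w j = p j + q j + r j) ∧ LatticeDisjointSeq p ∧
      (∀ j, |p j| ≤ v (j + 1)) ∧ (∀ j, |q j| ≤ (2 : ℝ) ^ (j + 1) • σ j) ∧ ∀ j, |r j| ≤ u := by
  have hu : 0 ≤ u := (hv 0).trans (by simpa using hvu 0)
  have hs : ∀ j, 0 ≤ (2 : ℝ) ^ (j + 1) • σ j :=
    fun j => smul_nonneg (by positivity) ((hv 0).trans (hσ 0 j j.zero_le))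
  set y := slidingHump v σ u
  have hdecomp : ∀ j, ∃ p q r : X, w j = p + q + r ∧ |p| ≤ y j ∧
      |q| ≤ (2 : ℝ) ^ (j + 1) • σ j ∧ |r| ≤ u := by
    intro j
    have hwy : |w j| ≤ y j + ((2 : ℝ) ^ (j + 1) • σ j + u) :=
      (hw j).trans (sub_le_iff_le_add.1 (by rw [← sub_sub]; exact le_posPart _))
    obtain ⟨p, hp, hwp⟩ :=
      exists_abs_le_abs_sub_le_of_abs_le_add (posPart_nonneg _) (add_nonneg (hs j) hu) hwy
    obtain ⟨q, hq, hr⟩ := exists_abs_le_abs_sub_le_of_abs_le_add (hs j) hu hwp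
    exact ⟨p, q, w j - p - q, by abel, hp, hq, hr⟩
  choose p q r hpqr hp hq hr using hdecomp
  have hyv : ∀ j, y j ≤ v (j + 1) :=
    fun j => sup_le ((sub_le_self _ hu).trans (sub_le_self _ (hs j))) (hv _)
  exact ⟨p, q, r, hpqr, (latticeDisjointSeq_slidingHump hv hvu hσ).mono fun j =>
    (hp j).trans_eq (abs_of_nonneg (posPart_nonneg _)).symm, fun j => (hp j).trans (hyv j), hq, hr⟩

end SlidingHump

lemma tendstoUniformlyOn_zero_of_exists_abs_lt {α : Type*} {F : ℕ → α → ℝ} {s : Set α}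
    (h : ∀ φ : ℕ → ℕ, StrictMono φ → ∀ x : ℕ → α, (∀ k, x k ∈ s) →
      ∀ ε > 0, ∃ k, |F (φ k) (x k)| < ε) :
    TendstoUniformlyOn F (fun _ => 0) atTop s := by
  rw [Metric.tendstoUniformlyOn_iff]
  by_contra! ⟨ε, hε, hfreq⟩
  obtain ⟨φ, hφ, hbad⟩ := extraction_of_frequently_atTop hfreq
  choose x hxs hx using hbad
  obtain ⟨k, hk⟩ := h φ hφ x hxs ε hε
  have := hx k
  rw [dist_zero_left, Real.norm_eq_abs] at this
  linarith

section Operators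

variable {E F : Type*} [NormedAddCommGroup E] [Lattice E] [IsOrderedAddMonoid E] [HasSolidNorm E]
  [NormedSpace ℝ E] [NormedAddCommGroup F] [Lattice F] [IsOrderedAddMonoid F] [HasSolidNorm F]
  [NormedSpace ℝ F] {T : E →ₗ[ℝ] F} {A : Set E}

lemma OrderBoundedOperator.exists_abs_le (hT : OrderBoundedOperator T) (s : E) :
    ∃ b : F, 0 ≤ b ∧ ∀ w, |w| ≤ s → |T w| ≤ b := by
  obtain ⟨c, d, hcd⟩ := hT (-s) s
  refine ⟨|c| + |d|, add_nonneg (abs_nonneg c) (abs_nonneg d), fun w hw => ?_⟩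
  obtain ⟨hc, hd⟩ := hcd ⟨w, ⟨neg_le.1 ((neg_le_abs w).trans hw), (le_abs_self w).trans hw⟩, rfl⟩
  exact abs_le'.2 ⟨hd.trans ((le_abs_self d).trans (le_add_of_nonneg_left (abs_nonneg c))),
    (neg_le_neg hc).trans ((neg_le_abs c).trans (le_add_of_nonneg_right (abs_nonneg d)))⟩

-- `T` need not be continuous: an unbounded image would produce `a k ∈ A` with
-- `‖T (a k)‖ > 2 ^ k * k`, all dominated by `2 ^ k • u` for a single `u ≥ 0`.
lemma OrderBoundedOperator.isBounded_image [CompleteSpace E] (hT : OrderBoundedOperator T)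
    (hA : Bornology.IsBounded A) : Bornology.IsBounded (T '' A) := by
  obtain ⟨M, hM⟩ := hA.exists_norm_le
  rw [isBounded_iff_forall_norm_le]
  by_contra! h
  have hbad : ∀ k : ℕ, ∃ a ∈ A, (2 : ℝ) ^ k * k < ‖T a‖ := fun k => by
    obtain ⟨_, ⟨a, ha, rfl⟩, hlt⟩ := h ((2 : ℝ) ^ k * k)
    exact ⟨a, ha, hlt⟩
  choose a haA hak using hbad
  obtain ⟨u, -, hu⟩ := exists_nonneg_abs_le_two_pow_smul fun k => hM _ (haA k)
  obtain ⟨b, -, hb⟩ := hT.exists_abs_le u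
  obtain ⟨k, hk⟩ := exists_nat_gt ‖b‖
  have hscaled : |(2⁻¹ : ℝ) ^ k • a k| ≤ u := by
    rw [abs_smul_of_nonneg (by positivity)]
    calc (2⁻¹ : ℝ) ^ k • |a k| ≤ (2⁻¹ : ℝ) ^ k • (2 : ℝ) ^ k • u :=
          smul_le_smul_of_nonneg_left (hu k) (by positivity)
      _ = u := by rw [smul_smul, ← mul_pow, inv_mul_cancel₀ two_ne_zero, one_pow, one_smul]
  have hnorm : (2⁻¹ : ℝ) ^ k * ‖T (a k)‖ ≤ ‖b‖ := by
    rw [← abs_of_pos (by positivity : (0 : ℝ) < 2⁻¹ ^ k), ← Real.norm_eq_abs, ← norm_smul,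
      ← map_smul]
    exact norm_le_norm_of_abs_le_abs ((hb _ hscaled).trans (le_abs_self b))
  have h2k : (0 : ℝ) < 2 ^ k := by positivity
  have := hak k
  rw [inv_pow, inv_mul_le_iff₀ h2k] at hnorm
  nlinarith

end Operators

section Main

variable {E F : Type*} [NormedAddCommGroup E] [Lattice E] [IsOrderedAddMonoid E] [HasSolidNorm E]
  [NormedSpace ℝ E] [NormedAddCommGroup F] [Lattice F] [IsOrderedAddMonoid F] [HasSolidNorm F]
  [NormedSpace ℝ F] {T : E →ₗ[ℝ] F} {A : Set E}

lemma AlmostLimitedSet.tendsto_apply {S : Set F} (hS : AlmostLimitedSet S)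
    {f : ℕ → F →L[ℝ] ℝ} (hfd : DualDisjointSeq f) (hfw : WeakStarNull f) {y : ℕ → F}
    (hy : ∀ n, y n ∈ S) : Tendsto (fun n => f n (y n)) atTop (𝓝 0) := by
  have hu := Metric.tendstoUniformlyOn_iff.1 (hS.2 f hfd hfw)
  exact Metric.tendsto_nhds.2 fun ε hε =>
    (hu ε hε).mono fun n hn => by simpa [dist_comm] using hn _ (hy n)

def DisjointPairingNull (T : E →ₗ[ℝ] F) (A : Set E) : Prop :=
  ∀ x : ℕ → E, (∀ n, x n ∈ A) → (∀ n, 0 ≤ x n) → LatticeDisjointSeq x →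
    ∀ f : ℕ → F →L[ℝ] ℝ, (∀ n, PositiveFunctional (f n)) → DualDisjointSeq f →
      WeakStarNull f → Tendsto (fun n => f n (T (x n))) atTop (𝓝 0)

-- The hypothesis only covers positive sequences: split `f n = (f n)⁺ - (-f n)⁺` and
-- `p n = (p n)⁺ - (p n)⁻`.
lemma DisjointPairingNull.tendsto_apply (hH : DisjointPairingNull T A) (hAs : IsSolid A)
    {f : ℕ → F →L[ℝ] ℝ} (hfd : DualDisjointSeq f) (hfw : WeakStarNull f)
    (hfa : AbsWeakStarNull f) {p : ℕ → E} (hpA : ∀ n, p n ∈ A) (hpd : LatticeDisjointSeq p) :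
    Tendsto (fun n => f n (T (p n))) atTop (𝓝 0) := by
  have hpart : ∀ q : ℕ → E, (∀ n, 0 ≤ q n) → (∀ n, q n ≤ |p n|) →
      ∀ g : ℕ → F →L[ℝ] ℝ, DualDisjointSeq g → WeakStarNull g → AbsWeakStarNull g →
        Tendsto (fun n => posPartCLM (g n) (T (q n))) atTop (𝓝 0) := by
    intro q hq0 hqp g hgd hgw hga
    have hqp' : ∀ n, |q n| ≤ |p n| := fun n => (abs_of_nonneg (hq0 n)).trans_le (hqp n)
    exact hH q (fun n => hAs _ (hpA n) _ (hqp' n)) hq0 (hpd.mono hqp') _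
      (fun n => positiveFunctional_posPartCLM _) hgd.posPart (hgw.posPart hga)
  have hpos := hpart _ (fun n => posPart_nonneg _) (fun n => posPart_le_abs _)
  have hneg := hpart _ (fun n => negPart_nonneg _) (fun n => negPart_le_abs _)
  have h := ((hpos f hfd hfw hfa).sub (hpos _ hfd.neg hfw.neg hfa.neg)).sub
    ((hneg f hfd hfw hfa).sub (hneg _ hfd.neg hfw.neg hfa.neg))
  simp only [sub_zero] at h
  refine h.congr fun n => ?_
  rw [posPartCLM_sub_posPartCLM_neg, posPartCLM_sub_posPartCLM_neg, ← map_sub, ← map_sub,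
    posPart_sub_negPart]

lemma DisjointPairingNull.exists_abs_apply_lt [CompleteSpace E] (hH : DisjointPairingNull T A)
    (hT : OrderBoundedOperator T) (hAb : Bornology.IsBounded A) (hAs : IsSolid A)
    {f : ℕ → F →L[ℝ] ℝ} (hfd : DualDisjointSeq f) (hfw : WeakStarNull f)
    (hfa : AbsWeakStarNull f) {x : ℕ → E} (hxA : ∀ k, x k ∈ A) {ε : ℝ} (hε : 0 < ε) :
    ∃ k, |f k (T (x k))| < ε := by
  choose b hb0 hb using hT.exists_abs_le
  have hbound : ∀ k s w, |w| ≤ s → |f k (T w)| ≤ absFunctional (f k) (b s) := fun k s w hw =>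
    (abs_apply_le_absFunctional _ _).trans (absFunctional_mono _ (abs_nonneg _) (hb s w hw))
  obtain ⟨m, hm, hsmall⟩ := exists_strictMono_forall_partialSum (fun k => |x k|)
    (P := fun j k s => absFunctional (f k) (b ((2 : ℝ) ^ (j + 1) • s)) < ε / 4)
    fun j s => (hfa _ (hb0 _)).eventually_lt_const (by positivity)
  obtain ⟨M, hM⟩ := hAb.exists_norm_le
  obtain ⟨u, -, hu⟩ := exists_nonneg_abs_le_two_pow_smul fun j => hM _ (hxA (m j))
  obtain ⟨p, q, r, hpqr, hpd, hpx, hq, hr⟩ := exists_slidingHump_decomposition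
    (σ := fun j => ∑ i ∈ Finset.range (j + 1), |x (m i)|) (fun j => abs_nonneg _) hu
    (fun i j hij => Finset.single_le_sum (f := fun i => |x (m i)|) (fun _ _ => abs_nonneg _)
      (Finset.mem_range.2 (Nat.lt_succ_of_le hij))) (w := fun j => x (m (j + 1))) fun _ => le_rfl
  have hm' : StrictMono fun j => m (j + 1) := hm.comp fun _ _ => Nat.succ_lt_succ
  have hp : Tendsto (fun j => f (m (j + 1)) (T (p j))) atTop (𝓝 0) :=
    hH.tendsto_apply hAs (hfd.comp hm') (hfw.comp hm') (hfa.comp hm')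
      (fun j => hAs _ (hxA _) _ (hpx j)) hpd
  have hr' : Tendsto (fun j => absFunctional (f (m (j + 1))) (b u)) atTop (𝓝 0) :=
    (hfa _ (hb0 u)).comp hm'.tendsto_atTop
  obtain ⟨j, hj⟩ := ((hp.abs.add hr').eventually_lt_const
    (by rw [abs_zero, add_zero]; positivity : |(0 : ℝ)| + 0 < 3 * ε / 4)).exists
  refine ⟨m (j + 1), ?_⟩
  have h₁ := hsmall j
  have h₂ := hbound (m (j + 1)) _ _ (hq j)
  have h₃ := hbound (m (j + 1)) _ _ (hr j)
  calc |f (m (j + 1)) (T (x (m (j + 1))))|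
      ≤ |f (m (j + 1)) (T (p j))| + |f (m (j + 1)) (T (q j))| + |f (m (j + 1)) (T (r j))| := by
        rw [hpqr j, map_add, map_add, map_add, map_add]
        exact abs_add_three _ _ _
    _ < ε := by linarith

end Main

theorem statement10_general {E F : Type*} [NormedAddCommGroup E] [Lattice E] [IsOrderedAddMonoid E] [HasSolidNorm E] [NormedSpace ℝ E]
    [CompleteSpace E] [NormedAddCommGroup F] [Lattice F] [IsOrderedAddMonoid F] [HasSolidNorm F] [NormedSpace ℝ F]
    (hF : PropertyD F)
    (T : E →ₗ[ℝ] F) (hT : OrderBoundedOperator T)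
    (A : Set E) (hAb : Bornology.IsBounded A) (hAs : IsSolid A) :
    AlmostLimitedSet (T '' A) ↔
      ∀ x : ℕ → E, (∀ n, x n ∈ A) → (∀ n, 0 ≤ x n) → LatticeDisjointSeq x →
        ∀ f : ℕ → F →L[ℝ] ℝ, (∀ n, PositiveFunctional (f n)) → DualDisjointSeq f →
          WeakStarNull f →
            Filter.Tendsto (fun n => f n (T (x n))) Filter.atTop (nhds (0 : ℝ)) := by
  refine ⟨fun h x hxA _ _ f _ hfd hfw => h.tendsto_apply hfd hfw fun n => ⟨x n, hxA n, rfl⟩,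
    fun hH => ⟨hT.isBounded_image hAb, fun f hfd hfw => ?_⟩⟩
  refine tendstoUniformlyOn_zero_of_exists_abs_lt fun φ hφ y hy ε hε => ?_
  choose x hxA hxy using hy
  obtain rfl : y = fun k => T (x k) := funext fun k => (hxy k).symm
  exact DisjointPairingNull.exists_abs_apply_lt hH hT hAb hAs (hfd.comp hφ) (hfw.comp hφ)
    ((hF f hfd hfw).comp hφ) hxA hε

/-- For Banach lattices `E, F` with `F` having property (d), an order
bounded operator `T : E → F` and a norm bounded solid set `A ⊆ E`: `T(A)` is almost
limited iff `f n (T (x n)) → 0` for every disjoint sequence `(x n)` in `A ∩ E⁺` and every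
disjoint weak* null sequence `(f n)` of positive functionals in `F*`. -/
theorem statement10 {E F : Type*} [NormedAddCommGroup E] [Lattice E] [IsOrderedAddMonoid E] [HasSolidNorm E] [NormedSpace ℝ E]
    [CompleteSpace E] [NormedAddCommGroup F] [Lattice F] [IsOrderedAddMonoid F] [HasSolidNorm F] [NormedSpace ℝ F] [CompleteSpace F]
    (hF : PropertyD F)
    (T : E →ₗ[ℝ] F) (hT : OrderBoundedOperator T)
    (A : Set E) (hAb : Bornology.IsBounded A) (hAs : IsSolid A) :
    AlmostLimitedSet (T '' A) ↔
      ∀ x : ℕ → E, (∀ n, x n ∈ A) → (∀ n, 0 ≤ x n) → LatticeDisjointSeq x →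
        ∀ f : ℕ → F →L[ℝ] ℝ, (∀ n, PositiveFunctional (f n)) → DualDisjointSeq f →
          WeakStarNull f →
            Filter.Tendsto (fun n => f n (T (x n))) Filter.atTop (nhds (0 : ℝ)) :=
  statement10_general hF T hT A hAb hAs
end

section
/- Let X be a Banach space and E a Banach lattice. If E satisfies the property (d), then every semi-compact operator T : X → E is almost limited; and if the lattice operations of E* are weak* sequentially continuous, then every semi-compact operator T : X → E is limited. -/
open Filter Topology Metric Pointwise

/-!
On an almost order bounded set `A ⊆ [-u, u] + δ B_E`, every functional satisfies
`|f x| ≤ |f| u + δ ‖f‖`. For a weak* null sequence `(f n)` the norms are bounded by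
Banach–Steinhaus, so once `(|f n|)` is weak* null, `f n → 0` uniformly on `A`. Property (d)
supplies this for disjoint sequences and weak* sequential continuity of the lattice
operations for all of them.
-/

section

variable {E : Type*} [NormedAddCommGroup E]

lemma WeakStarNull.exists_norm_le [NormedSpace ℝ E] [CompleteSpace E] {f : ℕ → E →L[ℝ] ℝ}
    (hf : WeakStarNull f) : ∃ M, ∀ n, ‖f n‖ ≤ M :=
  banach_steinhaus fun x => by
    obtain ⟨C, hC⟩ := (hf x).norm.bddAbove_range
    exact ⟨C, fun n => hC ⟨n, rfl⟩⟩

variable [Lattice E] [HasSolidNorm E]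

lemma bddAbove_image_abs_le [NormedSpace ℝ E] (f : E →L[ℝ] ℝ) (u : E) :
    BddAbove ((fun v => f v) '' {v : E | |v| ≤ u}) := by
  refine ⟨‖f‖ * ‖u‖, ?_⟩
  rintro _ ⟨v, hv, rfl⟩
  have hvu : ‖v‖ ≤ ‖u‖ := HasSolidNorm.solid (hv.trans (le_abs_self u))
  calc f v ≤ ‖f v‖ := Real.le_norm_self _
    _ ≤ ‖f‖ * ‖v‖ := f.le_opNorm v
    _ ≤ ‖f‖ * ‖u‖ := by gcongr

variable [IsOrderedAddMonoid E]

lemma AlmostOrderBounded.isBounded {A : Set E} (hA : AlmostOrderBounded A) :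
    Bornology.IsBounded A := by
  obtain ⟨u, -, hu⟩ := hA 1 one_pos
  refine isBounded_iff_forall_norm_le.2 ⟨‖u‖ + 1, fun x hx => ?_⟩
  obtain ⟨y, hy, z, hz, rfl⟩ := hu hx
  have hyu : ‖y‖ ≤ ‖u‖ :=
    HasSolidNorm.solid ((abs_le'.2 ⟨hy.2, neg_le.mp hy.1⟩).trans (le_abs_self u))
  calc ‖y + z‖ ≤ ‖y‖ + ‖z‖ := norm_add_le y z
    _ ≤ ‖u‖ + 1 := add_le_add hyu (mem_closedBall_zero_iff.mp hz)

variable [NormedSpace ℝ E]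

lemma abs_apply_le_absFunctional_s18 (f : E →L[ℝ] ℝ) {u y : E} (hy : |y| ≤ u) :
    |f y| ≤ absFunctional f u := by
  have hneg : f (-y) ≤ absFunctional f u :=
    le_csSup (bddAbove_image_abs_le f u) ⟨-y, show |-y| ≤ u by rwa [abs_neg], rfl⟩
  rw [map_neg] at hneg
  exact abs_le.2 ⟨by linarith, le_csSup (bddAbove_image_abs_le f u) ⟨y, hy, rfl⟩⟩

lemma abs_apply_le_of_mem_Icc_add_closedBall (f : E →L[ℝ] ℝ) {u x : E} {δ : ℝ}
    (hx : x ∈ Set.Icc (-u) u + closedBall (0 : E) δ) :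
    |f x| ≤ absFunctional f u + ‖f‖ * δ := by
  obtain ⟨y, hy, z, hz, rfl⟩ := hx
  have hyu : |y| ≤ u := abs_le'.2 ⟨hy.2, neg_le.mp hy.1⟩
  have hzδ : ‖z‖ ≤ δ := mem_closedBall_zero_iff.mp hz
  calc |f (y + z)| ≤ |f y| + |f z| := by rw [map_add]; exact abs_add_le _ _
    _ ≤ absFunctional f u + ‖f‖ * δ := by
      gcongr
      · exact abs_apply_le_absFunctional_s18 f hyu
      · exact (f.le_opNorm z).trans (by gcongr)

lemma AlmostOrderBounded.tendstoUniformlyOn [CompleteSpace E] {A : Set E}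
    (hA : AlmostOrderBounded A) {f : ℕ → E →L[ℝ] ℝ} (hf : WeakStarNull f)
    (habs : AbsWeakStarNull f) :
    TendstoUniformlyOn (fun n x => f n x) (fun _ => (0 : ℝ)) atTop A := by
  obtain ⟨M, hM⟩ := hf.exists_norm_le
  have hM1 : 0 < M + 1 := by linarith [(norm_nonneg _).trans (hM 0)]
  rw [Metric.tendstoUniformlyOn_iff]
  intro ε hε
  obtain ⟨u, hu0, hu⟩ := hA (ε / (2 * (M + 1))) (by positivity)
  have hsmall : ∀ᶠ n in atTop, absFunctional (f n) u < ε / 2 :=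
    (habs u hu0).eventually (gt_mem_nhds (half_pos hε))
  filter_upwards [hsmall] with n hn x hx
  have hnorm : ‖f n‖ * (ε / (2 * (M + 1))) ≤ ε / 2 :=
    calc ‖f n‖ * (ε / (2 * (M + 1))) ≤ (M + 1) * (ε / (2 * (M + 1))) := by
          gcongr; linarith [hM n]
      _ = ε / 2 := by field_simp
  rw [dist_zero_left, Real.norm_eq_abs]
  linarith [abs_apply_le_of_mem_Icc_add_closedBall (f n) (hu hx)]

lemma AlmostOrderBounded.almostLimitedSet [CompleteSpace E] (hE : PropertyD E) {A : Set E}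
    (hA : AlmostOrderBounded A) : AlmostLimitedSet A :=
  ⟨hA.isBounded, fun f hdisj hf => hA.tendstoUniformlyOn hf (hE f hdisj hf)⟩

lemma AlmostOrderBounded.limitedSet [CompleteSpace E] (hE : DualLatticeWeakStarSeqCont E)
    {A : Set E} (hA : AlmostOrderBounded A) : LimitedSet A :=
  ⟨hA.isBounded, fun f hf => hA.tendstoUniformlyOn hf (hE f hf)⟩

end

theorem statement18_general {X E : Type*} [NormedAddCommGroup X] [NormedSpace ℝ X]
    [NormedAddCommGroup E] [Lattice E] [IsOrderedAddMonoid E] [HasSolidNorm E] [NormedSpace ℝ E] [CompleteSpace E]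
    (T : X →L[ℝ] E)
    (hsc : ∀ ε : ℝ, 0 < ε → ∃ u : E, 0 ≤ u ∧
      T '' Metric.closedBall 0 1 ⊆ Set.Icc (-u) u + Metric.closedBall (0 : E) ε) :
    (PropertyD E → AlmostLimitedSet (T '' Metric.closedBall 0 1)) ∧
    (DualLatticeWeakStarSeqCont E → LimitedSet (T '' Metric.closedBall 0 1)) :=
  have hA : AlmostOrderBounded (T '' Metric.closedBall 0 1) := hsc
  ⟨hA.almostLimitedSet, hA.limitedSet⟩

/-- If `E` has property (d), then every semi-compact operator `T : X → E`
is almost limited; if the lattice operations of `E*` are weak* sequentially continuous,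
then every semi-compact operator `T : X → E` is limited. -/
theorem statement18 {X E : Type*} [NormedAddCommGroup X] [NormedSpace ℝ X]
    [CompleteSpace X] [NormedAddCommGroup E] [Lattice E] [IsOrderedAddMonoid E] [HasSolidNorm E] [NormedSpace ℝ E] [CompleteSpace E]
    (T : X →L[ℝ] E)
    (hsc : ∀ ε : ℝ, 0 < ε → ∃ u : E, 0 ≤ u ∧
      T '' Metric.closedBall 0 1 ⊆ Set.Icc (-u) u + Metric.closedBall (0 : E) ε) :
    (PropertyD E → AlmostLimitedSet (T '' Metric.closedBall 0 1)) ∧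
    (DualLatticeWeakStarSeqCont E → LimitedSet (T '' Metric.closedBall 0 1)) :=
  statement18_general T hsc
end
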